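/- Every sg-compact quasi-hyperdisconnected topological space is finite. (In particular, every sg-compact semi-Hausdorff space is finite.) -/
import Mathlib


open Set Topology

def SemiOpen {X : Type*} [TopologicalSpace X] (A : Set X) : Prop :=
  A ⊆ closure (interior A)

def SemiClosed {X : Type*} [TopologicalSpace X] (A : Set X) : Prop :=
  interior (closure A) ⊆ A

def scl {X : Type*} [TopologicalSpace X] (A : Set X) : Set X :=
  ⋂₀ {S | SemiClosed S ∧ A ⊆ S}

def sker {X : Type*} [TopologicalSpace X] (A : Set X) : Set X :=
  ⋂₀ {S | SemiOpen S ∧ A ⊆ S}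

def sint {X : Type*} [TopologicalSpace X] (A : Set X) : Set X :=
  ⋃₀ {S | SemiOpen S ∧ S ⊆ A}

def SgOpen {X : Type*} [TopologicalSpace X] (A : Set X) : Prop :=
  ∀ F : Set X, SemiClosed F → F ⊆ A → F ⊆ sint A

def SgClosed {X : Type*} [TopologicalSpace X] (A : Set X) : Prop :=
  scl A ⊆ sker A

def HSgClosed {X : Type*} [TopologicalSpace X] (A : Set X) : Prop :=
  ∀ B : Set X, B ⊆ A → SgClosed B

def SgCompact (X : Type*) [TopologicalSpace X] : Prop :=
  ∀ 𝒰 : Set (Set X), (∀ U ∈ 𝒰, SgOpen U) → ⋃₀ 𝒰 = Set.univ →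
    ∃ F ⊆ 𝒰, F.Finite ∧ ⋃₀ F = Set.univ

def LocallyIndiscrete (X : Type*) [TopologicalSpace X] : Prop :=
  ∀ U : Set X, IsOpen U → IsClosed U

def IndiscreteSpace (X : Type*) [TopologicalSpace X] : Prop :=
  ∀ U : Set X, IsOpen U → U = ∅ ∨ U = Set.univ

def Hyperconnected (X : Type*) [TopologicalSpace X] : Prop :=
  ∀ V W : Set X, IsOpen V → IsOpen W → V.Nonempty → W.Nonempty → (V ∩ W).Nonempty

def QuasiHyperdisconnected (X : Type*) [TopologicalSpace X] : Prop :=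
  ∀ U : Set X, IsOpen U → U.Infinite → ¬ Hyperconnected U

section Aux
variable {X : Type*} [TopologicalSpace X]

lemma semiOpen_of_isOpen {A : Set X} (h : IsOpen A) : SemiOpen A := by
  rw [SemiOpen, h.interior_eq]; exact subset_closure

lemma semiOpen_compl_of_semiClosed {A : Set X} (h : SemiClosed A) : SemiOpen Aᶜ := by
  rw [SemiOpen, interior_compl, closure_compl]
  exact compl_subset_compl.mpr h

lemma semiClosed_of_nwd {A : Set X} (h : interior (closure A) = ∅) : SemiClosed A := by
  rw [SemiClosed, h]; exact empty_subset _

lemma sgClosed_of_semiClosed {A : Set X} (h : SemiClosed A) : SgClosed A := by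
  intro x hx
  have hA : scl A ⊆ A := sInter_subset_of_mem ⟨h, subset_rfl⟩
  exact mem_sInter.mpr fun S hS => hS.2 (hA hx)

lemma sgOpen_compl_of_sgClosed {A : Set X} (h : SgClosed A) : SgOpen Aᶜ := by
  intro F hF hFA x hxF
  have hAF : A ⊆ Fᶜ := Set.subset_compl_comm.mp hFA
  have hsker : sker A ⊆ Fᶜ :=
    sInter_subset_of_mem ⟨semiOpen_compl_of_semiClosed hF, hAF⟩
  have hxscl : x ∉ scl A := fun hx => hsker (h hx) hxF
  rw [scl, mem_sInter] at hxscl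
  push_neg at hxscl
  obtain ⟨S, ⟨hS1, hS2⟩, hxS⟩ := hxscl
  exact mem_sUnion.mpr ⟨Sᶜ, ⟨semiOpen_compl_of_semiClosed hS1,
    compl_subset_compl.mpr hS2⟩, hxS⟩

lemma sgOpen_of_isOpen {A : Set X} (h : IsOpen A) : SgOpen A := fun _ _ hFA =>
  hFA.trans (subset_sUnion_of_mem ⟨semiOpen_of_isOpen h, subset_rfl⟩)

lemma nwd_finite (h1 : SgCompact X) (N : Set X)
    (hN : interior (closure N) = ∅) : N.Finite := by
  by_contra hinf
  have hInf : N.Infinite := hinf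
  have hNne : N.Nonempty := hInf.nonempty
  classical
  set 𝒰 : Set (Set X) := (fun x => (N \ {x})ᶜ) '' N with h𝒰
  have hsg : ∀ U ∈ 𝒰, SgOpen U := by
    rintro _ ⟨x, hx, rfl⟩
    apply sgOpen_compl_of_sgClosed
    apply sgClosed_of_semiClosed
    apply semiClosed_of_nwd
    have hsub : interior (closure (N \ {x})) ⊆ interior (closure N) :=
      interior_mono (closure_mono diff_subset)
    rw [hN] at hsub
    exact subset_empty_iff.mp hsub
  have hcov : ⋃₀ 𝒰 = univ := by
    ext y; simp only [mem_sUnion, mem_univ, iff_true]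
    by_cases hy : y ∈ N
    · exact ⟨(N \ {y})ᶜ, ⟨y, hy, rfl⟩, by simp⟩
    · obtain ⟨x, hx⟩ := hNne
      exact ⟨(N \ {x})ᶜ, ⟨x, hx, rfl⟩, fun h => hy h.1⟩
  obtain ⟨F, hFsub, hFfin, hFcov⟩ := h1 𝒰 hsg hcov
  have hch : ∀ u : Set X, ∃ x, x ∈ N ∧ (u ∈ F → (N \ {x})ᶜ = u) := fun u => by
    by_cases hu : u ∈ F
    · obtain ⟨x, hx, hxe⟩ := hFsub hu; exact ⟨x, hx, fun _ => hxe⟩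
    · exact ⟨hNne.choose, hNne.choose_spec, fun h => absurd h hu⟩
  choose g hg1 hg2 using hch
  have hSfin : Set.Finite (g '' F) := Set.Finite.image g hFfin
  obtain ⟨y, hyN, hyS⟩ := (hInf.diff hSfin).nonempty
  have hy : y ∈ ⋃₀ F := hFcov ▸ mem_univ y
  obtain ⟨u, huF, hyu⟩ := hy
  rw [← hg2 u huF] at hyu
  exact hyu ⟨hyN, fun he => hyS (he ▸ mem_image_of_mem g huF)⟩

lemma fcc {X : Type*} [TopologicalSpace X] (h1 : SgCompact X) (M : ℕ → Set X)
    (hop : ∀ n, IsOpen (M n)) (hne : ∀ n, (M n).Nonempty)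
    (hdisj : ∀ a b, a ≠ b → M a ∩ M b = ∅) : False := by
  classical
  set P : Set X := ⋃ n, M n with hPdef
  have hPopen : IsOpen P := isOpen_iUnion hop
  set B : Set X := closure P \ P with hBdef
  -- B is nowhere dense
  have hBclosed : IsClosed B := isClosed_closure.sdiff hPopen
  have hintB : ∀ O : Set X, IsOpen O → O ⊆ closure P → O ∩ P = ∅ → O = ∅ := by
    intro O hO hOsub hOP
    rcases eq_empty_or_nonempty O with h | ⟨y, hy⟩
    · exact h
    · exfalso
      have := mem_closure_iff.mp (hOsub hy) O hO hy
      rw [hOP] at this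
      exact this.ne_empty rfl
  have hBnwd : interior (closure B) = ∅ := by
    rw [hBclosed.closure_eq]
    apply hintB _ isOpen_interior (interior_subset.trans diff_subset)
    apply eq_empty_of_subset_empty
    intro x ⟨hx1, hx2⟩
    exact (interior_subset hx1).2 hx2
  have hBfin : B.Finite := nwd_finite h1 B hBnwd
  set n : ℕ := B.ncard with hn
  -- residue class unions
  set T : Fin (n+1) → Set X := fun k => ⋃ (m : ℕ) (_ : m % (n+1) = (k : ℕ)), M m with hT
  have hTopen : ∀ k, IsOpen (T k) := fun k =>
    isOpen_iUnion fun m => isOpen_iUnion fun _ => hop m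
  have hTsubP : ∀ k, T k ⊆ P := fun k =>
    iUnion₂_subset fun m _ => subset_iUnion M m
  have hMsubT : ∀ (k : Fin (n+1)) (m : ℕ), m % (n+1) = (k : ℕ) → M m ⊆ T k :=
    fun k m hm x hx => mem_iUnion₂.mpr ⟨m, hm, hx⟩
  have hMT : ∀ k (m : ℕ), (M m ∩ T k).Nonempty → m % (n+1) = (k : ℕ) := by
    intro k m ⟨x, hxM, hxT⟩
    obtain ⟨m', hm', hxM'⟩ := mem_iUnion₂.mp hxT
    by_contra hmk
    have hne' : m ≠ m' := fun h => hmk (h ▸ hm')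
    exact (Set.eq_empty_iff_forall_notMem.mp (hdisj m m' hne')) x ⟨hxM, hxM'⟩
  -- points of closure (T k) outside T k are in B
  have hclT : ∀ k, closure (T k) \ T k ⊆ B := by
    intro k y ⟨hy1, hy2⟩
    have hyP : y ∉ P := by
      intro hyP
      obtain ⟨m, hm⟩ := mem_iUnion.mp hyP
      have hnonempty := mem_closure_iff.mp hy1 (M m) (hop m) hm
      have hmod := hMT k m hnonempty
      exact hy2 (hMsubT k m hmod hm)
    exact ⟨closure_mono (hTsubP k) hy1, hyP⟩
  -- some T k is semiclosed
  have hexists : ∃ k, interior (closure (T k)) ⊆ T k := by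
    by_contra hall
    push_neg at hall
    simp only [not_subset] at hall
    choose b hb1 hb2 using hall
    have hbB : ∀ k, b k ∈ B := fun k => hclT k ⟨interior_subset (hb1 k), hb2 k⟩
    have hbinj : Function.Injective b := by
      intro k k' hkk'
      by_contra hne'
      set O : Set X := interior (closure (T k)) ∩ interior (closure (T k')) with hO
      have hOopen : IsOpen O := isOpen_interior.inter isOpen_interior
      have hbO : b k ∈ O := ⟨hb1 k, hkk' ▸ hb1 k'⟩
      have hOP : O ∩ P = ∅ := by
        apply eq_empty_of_subset_empty
        rintro x ⟨hxO, hxP⟩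
        obtain ⟨m, hm⟩ := mem_iUnion.mp hxP
        have h1' : (M m ∩ T k).Nonempty :=
          mem_closure_iff.mp (interior_subset hxO.1) (M m) (hop m) hm
        have h2' : (M m ∩ T k').Nonempty :=
          mem_closure_iff.mp (interior_subset hxO.2) (M m) (hop m) hm
        have e1 := hMT k m h1'
        have e2 := hMT k' m h2'
        exact hne' (Fin.ext (e1 ▸ e2))
      have hOcl : O ⊆ closure P :=
        (inter_subset_left).trans ((interior_subset).trans (closure_mono (hTsubP k)))
      have := hintB O hOopen hOcl hOP
      rw [this] at hbO
      exact hbO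
    -- cardinality contradiction
    have : Nat.card (Fin (n+1)) ≤ Nat.card B := by
      have : Finite ↥B := hBfin.to_subtype
      exact Nat.card_le_card_of_injective (fun k => (⟨b k, hbB k⟩ : ↥B))
        (fun k k' h => hbinj (congrArg Subtype.val h))
    rw [Nat.card_eq_fintype_card, Fintype.card_fin, Nat.card_coe_set_eq] at this
    omega
  obtain ⟨k, hk⟩ := hexists
  -- the bad cover
  have hTk_sgclosed : SgClosed (T k) := sgClosed_of_semiClosed hk
  set 𝒰 : Set (Set X) := insert (T k)ᶜ (Set.range M) with h𝒰
  have hsg : ∀ U ∈ 𝒰, SgOpen U := by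
    rintro U (rfl | ⟨m, rfl⟩)
    · exact sgOpen_compl_of_sgClosed hTk_sgclosed
    · exact sgOpen_of_isOpen (hop m)
  have hcov : ⋃₀ 𝒰 = univ := by
    ext y; simp only [mem_sUnion, mem_univ, iff_true]
    by_cases hy : y ∈ T k
    · obtain ⟨m, _, hm2⟩ := mem_iUnion₂.mp hy
      exact ⟨M m, Or.inr ⟨m, rfl⟩, hm2⟩
    · exact ⟨(T k)ᶜ, Or.inl rfl, hy⟩
  obtain ⟨F, hFsub, hFfin, hFcov⟩ := h1 𝒰 hsg hcov
  have hMinj : Function.Injective M := by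
    intro a b hab
    by_contra hne'
    obtain ⟨x, hx⟩ := hne a
    exact (Set.eq_empty_iff_forall_notMem.mp (hdisj a b hne')) x ⟨hx, hab ▸ hx⟩
  have hSfin : (M ⁻¹' F).Finite := hFfin.preimage hMinj.injOn
  obtain ⟨c, hc⟩ := hSfin.bddAbove
  set m₀ : ℕ := (k : ℕ) + (n+1) * (c+1) with hm₀
  have hm₀mod : m₀ % (n+1) = (k : ℕ) := by
    rw [hm₀, Nat.add_mul_mod_self_left, Nat.mod_eq_of_lt k.isLt]
  have hm₀S : m₀ ∉ M ⁻¹' F := by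
    intro h
    have := hc h
    have : c + 1 ≤ m₀ := le_trans (Nat.le_mul_of_pos_left _ (Nat.succ_pos n))
      (Nat.le_add_left _ _)
    omega
  obtain ⟨x, hx⟩ := hne m₀
  have hxcov : x ∈ ⋃₀ F := hFcov ▸ mem_univ x
  obtain ⟨u, huF, hxu⟩ := hxcov
  rcases hFsub huF with rfl | ⟨m', rfl⟩
  · exact hxu (hMsubT k m₀ hm₀mod hx)
  · have hm' : m' ∈ M ⁻¹' F := huF
    have hne'' : m₀ ≠ m' := fun h => hm₀S (h ▸ hm')
    exact (Set.eq_empty_iff_forall_notMem.mp (hdisj m₀ m' hne'')) x ⟨hx, hxu⟩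

lemma step {X : Type*} [TopologicalSpace X] (h2 : QuasiHyperdisconnected X)
    (star : ∀ N : Set X, interior (closure N) = ∅ → N.Finite)
    (U : Set X) (hUo : IsOpen U) (hUi : U.Infinite) :
    ∃ O U' : Set X, IsOpen O ∧ O.Nonempty ∧ IsOpen U' ∧ U'.Infinite ∧
      O ⊆ U ∧ U' ⊆ U ∧ O ∩ U' = ∅ := by
  have hH := h2 U hUo hUi
  rw [Hyperconnected] at hH
  push_neg at hH
  obtain ⟨V, W, hVo, hWo, hVne, hWne, hVW⟩ := hH
  obtain ⟨t, hto, hteq⟩ := isOpen_induced_iff.mp hVo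
  obtain ⟨s, hso, hseq⟩ := isOpen_induced_iff.mp hWo
  have htUo : IsOpen (t ∩ U) := hto.inter hUo
  have hsUo : IsOpen (s ∩ U) := hso.inter hUo
  have htUne : (t ∩ U).Nonempty := by
    obtain ⟨x, hx⟩ := hVne
    rw [← hteq] at hx
    exact ⟨(x : X), hx, x.2⟩
  have hsUne : (s ∩ U).Nonempty := by
    obtain ⟨x, hx⟩ := hWne
    rw [← hseq] at hx
    exact ⟨(x : X), hx, x.2⟩
  have hdisj : (t ∩ U) ∩ (s ∩ U) = ∅ := by
    apply eq_empty_of_subset_empty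
    rintro y ⟨⟨hyt, hyU⟩, ⟨hys, _⟩⟩
    have : (⟨y, hyU⟩ : ↥U) ∈ V ∩ W := by
      constructor
      · rw [← hteq]; exact hyt
      · rw [← hseq]; exact hys
    rw [hVW] at this
    exact this
  by_cases hti : (t ∩ U).Infinite
  · exact ⟨s ∩ U, t ∩ U, hsUo, hsUne, htUo, hti, inter_subset_right,
      inter_subset_right, by rw [inter_comm]; exact hdisj⟩
  by_cases hsi : (s ∩ U).Infinite
  · exact ⟨t ∩ U, s ∩ U, htUo, htUne, hsUo, hsi, inter_subset_right,
      inter_subset_right, hdisj⟩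
  have htf : (t ∩ U).Finite := Set.not_infinite.mp hti
  set V₀ : Set X := t ∩ U with hV₀
  by_cases hci : (U \ closure V₀).Infinite
  · refine ⟨V₀, U \ closure V₀, htUo, htUne, hUo.sdiff isClosed_closure, hci,
      inter_subset_right, diff_subset, ?_⟩
    apply eq_empty_of_subset_empty
    rintro y ⟨hy1, _, hy3⟩
    exact hy3 (subset_closure hy1)
  · exfalso
    have hcf : (U \ closure V₀).Finite := Set.not_infinite.mp hci
    have hUsplit : U ⊆ (U \ closure V₀) ∪ (U ∩ closure V₀) := by
      intro x hx
      by_cases h : x ∈ closure V₀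
      · exact Or.inr ⟨hx, h⟩
      · exact Or.inl ⟨hx, h⟩
    have hUcl : (U ∩ closure V₀).Infinite := by
      intro hfin'
      exact hUi ((hcf.union hfin').subset hUsplit)
    set C : Set X := closure V₀ \ V₀ with hC
    have hCinf : C.Infinite := by
      intro hCfin
      apply hUcl
      apply (htf.union hCfin).subset
      rintro x ⟨hxU, hxcl⟩
      by_cases h : x ∈ V₀
      · exact Or.inl h
      · exact Or.inr ⟨hxcl, h⟩
    have hCnwd : interior (closure C) = ∅ := by
      have hCclosed : IsClosed C := isClosed_closure.sdiff htUo
      rw [hCclosed.closure_eq]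
      apply eq_empty_of_subset_empty
      intro y hy
      have hy1 : y ∈ closure V₀ := (interior_subset hy).1
      obtain ⟨z, hz1, hz2⟩ := mem_closure_iff.mp hy1 _ isOpen_interior hy
      exact (interior_subset hz1).2 hz2
    exact hCinf (star C hCnwd)

end Aux

theorem stmt_16 {X : Type*} [TopologicalSpace X]
    (h1 : SgCompact X) (h2 : QuasiHyperdisconnected X) : Finite X := by
  by_contra hfin
  rw [not_finite_iff_infinite] at hfin
  have star : ∀ N : Set X, interior (closure N) = ∅ → N.Finite := nwd_finite h1
  have hstep := step h2 star
  classical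
  choose! Ofn Ufn hOop hOne hUop hUinf hOsub hUsub hOUdisj using hstep
  let F : ℕ → {S : Set X // IsOpen S ∧ S.Infinite} := fun n =>
    Nat.rec ⟨univ, isOpen_univ, infinite_univ⟩
      (fun _ p => ⟨Ufn p.1, hUop p.1 p.2.1 p.2.2, hUinf p.1 p.2.1 p.2.2⟩) n
  let M : ℕ → Set X := fun n => Ofn (F n).1
  have hFsucc : ∀ n, (F (n+1)).1 = Ufn (F n).1 := fun n => rfl
  have hFstep : ∀ n, (F (n+1)).1 ⊆ (F n).1 := fun n =>
    hFsucc n ▸ hUsub (F n).1 (F n).2.1 (F n).2.2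
  have hFanti : ∀ m n, m ≤ n → (F n).1 ⊆ (F m).1 := by
    intro m n h
    induction n with
    | zero => rw [Nat.le_zero.mp h]
    | succ n ih =>
      rcases Nat.lt_or_ge m (n+1) with h' | h'
      · exact (hFstep n).trans (ih (Nat.lt_succ_iff.mp h'))
      · rw [Nat.le_antisymm h h']
  have hMop : ∀ n, IsOpen (M n) := fun n => hOop (F n).1 (F n).2.1 (F n).2.2
  have hMne : ∀ n, (M n).Nonempty := fun n => hOne (F n).1 (F n).2.1 (F n).2.2
  have hMsub : ∀ n, M n ⊆ (F n).1 := fun n => hOsub (F n).1 (F n).2.1 (F n).2.2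
  have hMF : ∀ n, M n ∩ (F (n+1)).1 = ∅ := fun n =>
    hFsucc n ▸ hOUdisj (F n).1 (F n).2.1 (F n).2.2
  have hkey : ∀ a b, a < b → M a ∩ M b = ∅ := by
    intro a b hab
    apply eq_empty_of_subset_empty
    rintro x ⟨hx1, hx2⟩
    have : x ∈ (F (a+1)).1 := hFanti (a+1) b hab (hMsub b hx2)
    exact (Set.eq_empty_iff_forall_notMem.mp (hMF a)) x ⟨hx1, this⟩
  have hMdisj : ∀ a b, a ≠ b → M a ∩ M b = ∅ := by
    intro a b hab
    rcases Nat.lt_or_ge a b with h | h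
    · exact hkey a b h
    · rw [inter_comm]
      exact hkey b a (Nat.lt_of_le_of_ne h (Ne.symm hab))
  exact fcc h1 M hMop hMne hMdisj
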